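/- arXiv:2502.02467 — 4 statements merged into one kernel-verified Lean document; each statement's English description precedes it below -/
import Mathlib

section
/- Let P, Q be projections in ℂ^{n×n} with ‖P − Q‖ < 1, so that ran(P) and ker(Q) are complementary. The projection R onto ran(P) along ker(Q) satisfies the bound ‖R‖ ≤ ‖P‖/(1 − ‖P − Q‖). -/
/-!
Since `R` is idempotent with `ran R = ran P`, it fixes the range of `P`, so `R P = P`; since
`ker R = ker Q = ran (1 - Q)`, also `R Q = R`. Hence `R - P = R (Q - P)`, and the triangle
inequality gives `‖R‖ ≤ ‖P‖ + ‖R‖ ‖P - Q‖`, which rearranges to the bound when `‖P - Q‖ < 1`.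
-/

namespace ContinuousLinearMap

variable {S M : Type*} [Ring S] [TopologicalSpace M] [AddCommGroup M] [Module S M]

theorem mul_eq_right_of_range_le {R P : M →L[S] M} (hR : IsIdempotentElem R)
    (h : LinearMap.range (P : M →ₗ[S] M) ≤ LinearMap.range (R : M →ₗ[S] M)) : R * P = P :=
  coe_injective <| (LinearMap.IsIdempotentElem.comp_eq_right_iff
    (IsIdempotentElem.toLinearMap hR) _).mpr h

theorem mul_eq_left_of_ker_le {R Q : M →L[S] M} (hQ : IsIdempotentElem Q)
    (h : LinearMap.ker (Q : M →ₗ[S] M) ≤ LinearMap.ker (R : M →ₗ[S] M)) : R * Q = R :=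
  coe_injective <| (LinearMap.IsIdempotentElem.comp_eq_left_iff
    (IsIdempotentElem.toLinearMap hQ) _).mpr h

end ContinuousLinearMap

theorem norm_le_div_one_sub_norm_sub {A : Type*} [NonUnitalSeminormedRing A] {R P Q : A}
    (hRP : R * P = P) (hRQ : R * Q = R) (h : ‖P - Q‖ < 1) : ‖R‖ ≤ ‖P‖ / (1 - ‖P - Q‖) := by
  have hdiff : R - P = R * (Q - P) := by rw [mul_sub, hRQ, hRP]
  have hle : ‖R‖ ≤ ‖P‖ + ‖R‖ * ‖P - Q‖ :=
    calc ‖R‖ = ‖P + (R - P)‖ := by rw [add_sub_cancel]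
      _ ≤ ‖P‖ + ‖R * (Q - P)‖ := hdiff ▸ norm_add_le _ _
      _ ≤ ‖P‖ + ‖R‖ * ‖P - Q‖ := by grw [norm_mul_le, norm_sub_rev]
  rw [le_div_iff₀ (sub_pos.mpr h)]
  linarith

theorem norm_projection_le_general (n : ℕ)
    (P Q R : EuclideanSpace ℂ (Fin n) →L[ℂ] EuclideanSpace ℂ (Fin n))
    (hQ : Q * Q = Q) (h : ‖P - Q‖ < 1)
    (hR : R * R = R)
    (hRran : LinearMap.range (R : EuclideanSpace ℂ (Fin n) →ₗ[ℂ] EuclideanSpace ℂ (Fin n)) =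
      LinearMap.range (P : EuclideanSpace ℂ (Fin n) →ₗ[ℂ] EuclideanSpace ℂ (Fin n)))
    (hRker : LinearMap.ker (R : EuclideanSpace ℂ (Fin n) →ₗ[ℂ] EuclideanSpace ℂ (Fin n)) =
      LinearMap.ker (Q : EuclideanSpace ℂ (Fin n) →ₗ[ℂ] EuclideanSpace ℂ (Fin n))) :
    ‖R‖ ≤ ‖P‖ / (1 - ‖P - Q‖) :=
  norm_le_div_one_sub_norm_sub
    (ContinuousLinearMap.mul_eq_right_of_range_le hR hRran.ge)
    (ContinuousLinearMap.mul_eq_left_of_ker_le hQ hRker.ge) h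

/-- If `P, Q` are projections on `ℂ^n` with `‖P - Q‖ < 1` (so that `ran(P)` and `ker(Q)`
are complementary), the projection `R` onto `ran(P)` along `ker(Q)` satisfies
`‖R‖ ≤ ‖P‖ / (1 - ‖P - Q‖)`. -/
theorem norm_projection_le (n : ℕ)
    (P Q R : EuclideanSpace ℂ (Fin n) →L[ℂ] EuclideanSpace ℂ (Fin n))
    (hP : P * P = P) (hQ : Q * Q = Q) (h : ‖P - Q‖ < 1)
    (hR : R * R = R)
    (hRran : LinearMap.range (R : EuclideanSpace ℂ (Fin n) →ₗ[ℂ] EuclideanSpace ℂ (Fin n)) =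
      LinearMap.range (P : EuclideanSpace ℂ (Fin n) →ₗ[ℂ] EuclideanSpace ℂ (Fin n)))
    (hRker : LinearMap.ker (R : EuclideanSpace ℂ (Fin n) →ₗ[ℂ] EuclideanSpace ℂ (Fin n)) =
      LinearMap.ker (Q : EuclideanSpace ℂ (Fin n) →ₗ[ℂ] EuclideanSpace ℂ (Fin n))) :
    ‖R‖ ≤ ‖P‖ / (1 - ‖P - Q‖) :=
  norm_projection_le_general n P Q R hQ h hR hRran hRker
end

section
/- Let g ∈ H¹(ℝ). The multiplication operator A : H¹(ℝ) → L²(ℝ) defined by (Au)(x) = g(x)u(x) is well-defined and compact. -/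
/-!
A function `u` on `ℝ` with `u, u' ∈ L²` is 1/2-Hölder with constant `‖u'‖₂` (fundamental theorem
of calculus and Cauchy–Schwarz) and bounded by `‖u‖₂ + ‖u'‖₂`. Hence an `H¹`-bounded family is
uniformly bounded and equicontinuous, and by Arzelà–Ascoli it has, on any compact `K`, a finite
`η`-net for the uniform distance. Splitting `g (u - v) = g (u - v) 1_K + g (u - v) 1_{Kᶜ}` bounds
`‖g u - g v‖₂` by `η ‖g‖₂ + 4M ‖g 1_{Kᶜ}‖₂`, and `K` is chosen so that the tail of `g` is small.
-/

open MeasureTheory Set Filter Topology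
open scoped ENNReal NNReal BoundedContinuousFunction

theorem MeasureTheory.MemLp.exists_isCompact_eLpNorm_indicator_compl_le {α E : Type*}
    [TopologicalSpace α] [NormalSpace α] [R1Space α] [WeaklyLocallyCompactSpace α] [MeasurableSpace α]
    [BorelSpace α] [NormedAddCommGroup E] [NormedSpace ℝ E] {μ : Measure α} [μ.Regular]
    {p : ℝ≥0∞} (hp : p ≠ ∞) {f : α → E} (hf : MemLp f p μ) {ε : ℝ≥0∞} (hε : ε ≠ 0) :
    ∃ K, IsCompact K ∧ eLpNorm (Kᶜ.indicator f) p μ ≤ ε := by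
  obtain ⟨g, hg_supp, hfg, -, -⟩ := hf.exists_hasCompactSupport_eLpNorm_sub_le hp hε
  refine ⟨tsupport g, hg_supp, ?_⟩
  have : (tsupport g)ᶜ.indicator f = (tsupport g)ᶜ.indicator (f - g) := by
    refine indicator_congr fun x hx => ?_
    rw [Pi.sub_apply, image_eq_zero_of_notMem_tsupport hx, sub_zero]
  rw [this]
  exact (MeasureTheory.eLpNorm_indicator_le _).trans hfg

theorem eLpNorm_mul_le_of_norm_le {α 𝕜 : Type*} [MeasurableSpace α] [NormedRing 𝕜]
    {μ : Measure α} {p : ℝ≥0∞} (hp : 1 ≤ p) {g w : α → 𝕜} (hg : AEStronglyMeasurable g μ)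
    {K : Set α} (hK : MeasurableSet K) {a b : ℝ≥0} (hwK : ∀ x ∈ K, ‖w x‖ ≤ a)
    (hw : ∀ x, ‖w x‖ ≤ b) :
    eLpNorm (fun x => g x * w x) p μ ≤ a * eLpNorm g p μ + b * eLpNorm (Kᶜ.indicator g) p μ := by
  have hpointwise : ∀ x, ‖g x * w x‖ ≤ a * ‖g x‖ + b * ‖Kᶜ.indicator g x‖ := by
    intro x
    refine (norm_mul_le _ _).trans ?_
    by_cases hx : x ∈ K
    · rw [indicator_of_notMem (notMem_compl_iff.mpr hx), norm_zero, mul_zero, add_zero,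
        mul_comm]
      exact mul_le_mul_of_nonneg_right (hwK x hx) (norm_nonneg _)
    · rw [indicator_of_mem hx, mul_comm ‖g x‖]
      exact le_add_of_nonneg_of_le (by positivity)
        (mul_le_mul_of_nonneg_right (hw x) (norm_nonneg _))
  calc eLpNorm (fun x => g x * w x) p μ
      ≤ eLpNorm ((a : ℝ) • (‖g ·‖) + (b : ℝ) • (‖Kᶜ.indicator g ·‖)) p μ :=
        eLpNorm_mono_real hpointwise
    _ ≤ eLpNorm ((a : ℝ) • (‖g ·‖)) p μ + eLpNorm ((b : ℝ) • (‖Kᶜ.indicator g ·‖)) p μ :=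
        eLpNorm_add_le (hg.norm.const_smul _) ((hg.indicator hK.compl).norm.const_smul _) hp
    _ = a * eLpNorm g p μ + b * eLpNorm (Kᶜ.indicator g) p μ := by
        simp only [eLpNorm_const_smul, eLpNorm_norm, NNReal.enorm_eq]

theorem exists_finset_forall_dist_lt_of_equicontinuousOn {ι X β : Type*} [TopologicalSpace X]
    [MetricSpace β] {F : ι → X → β} {K : Set X} (hK : IsCompact K) {s : Set β}
    (hs : IsCompact s) (hFs : ∀ i, ∀ x ∈ K, F i x ∈ s) (hF : EquicontinuousOn F K)
    {ε : ℝ} (hε : 0 < ε) :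
    ∃ T : Finset ι, ∀ i, ∃ j ∈ T, ∀ x ∈ K, dist (F i x) (F j x) < ε := by
  have : CompactSpace K := isCompact_iff_compactSpace.mp hK
  have hF' : Equicontinuous (K.domRestrict ∘ F) := (equicontinuous_restrict_iff F).mpr hF
  let G : ι → K →ᵇ β := fun i =>
    BoundedContinuousFunction.mkOfCompact ⟨K.domRestrict (F i), hF'.continuous i⟩
  have hG : Equicontinuous ((↑) : range G → K → β) := by
    simp only [Equicontinuous, EquicontinuousAt, forall_subtype_range_iff]
    exact hF'
  have hbounded : TotallyBounded (range G) :=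
    (BoundedContinuousFunction.arzela_ascoli s hs _ (by rintro _ x ⟨i, rfl⟩; exact hFs i x x.2)
      hG).totallyBounded.subset subset_closure
  obtain ⟨t, hts, ht_fin, hcover⟩ := Metric.finite_approx_of_totallyBounded hbounded ε hε
  rw [← image_univ] at hts
  obtain ⟨T, -, hT_fin, hT⟩ := exists_subset_image_finite_and
    (p := fun t => range G ⊆ ⋃ y ∈ t, Metric.ball y ε) |>.mp ⟨t, hts, ht_fin, hcover⟩
  refine ⟨hT_fin.toFinset, fun i => ?_⟩
  obtain ⟨_, ⟨j, hj, rfl⟩, hij⟩ := mem_iUnion₂.mp (hT (mem_range_self i))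
  exact ⟨j, hT_fin.mem_toFinset.mpr hj, fun x hx =>
    (BoundedContinuousFunction.dist_coe_le_dist ⟨x, hx⟩).trans_lt hij⟩

theorem exists_finset_eLpNorm_mul_sub_le_of_equicontinuous {α 𝕜 ι : Type*}
    [TopologicalSpace α] [NormalSpace α] [T2Space α] [WeaklyLocallyCompactSpace α]
    [MeasurableSpace α] [BorelSpace α] {μ : Measure α} [μ.Regular] [RCLike 𝕜] {p : ℝ≥0∞}
    (hp₁ : 1 ≤ p) (hp : p ≠ ∞) {g : α → 𝕜} (hg : MemLp g p μ) {F : ι → α → 𝕜} {C : ℝ≥0}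
    (hFC : ∀ i x, ‖F i x‖ ≤ C) (hF : Equicontinuous F) {ε : ℝ≥0∞} (hε : ε ≠ 0) :
    ∃ T : Finset ι, ∀ i, ∃ j ∈ T, eLpNorm (fun x => g x * (F i x - F j x)) p μ ≤ ε := by
  have hε₂ : ε / 2 ≠ 0 := (ENNReal.half_pos hε).ne'
  obtain ⟨η, hη, hηg⟩ := ENNReal.exists_nnreal_pos_mul_lt hg.eLpNorm_ne_top hε₂
  obtain ⟨δ, hδ, hδC⟩ := ENNReal.exists_nnreal_pos_mul_lt ENNReal.coe_ne_top
    (a := (2 * C : ℝ≥0)) hε₂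
  obtain ⟨K, hK, htail⟩ :=
    hg.exists_isCompact_eLpNorm_indicator_compl_le hp (ENNReal.coe_ne_zero.mpr hδ.ne')
  obtain ⟨T, hT⟩ := exists_finset_forall_dist_lt_of_equicontinuousOn hK
    (isCompact_closedBall (0 : 𝕜) C) (fun i x _ => mem_closedBall_zero_iff.mpr (hFC i x))
    (hF.equicontinuousOn K) hη
  refine ⟨T, fun i => ?_⟩
  obtain ⟨j, hjT, hij⟩ := hT i
  have hdiff : ∀ x, ‖F i x - F j x‖ ≤ (2 * C : ℝ≥0) := fun x => by
    have := norm_sub_le_of_le (hFC i x) (hFC j x)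
    push_cast; linarith
  refine ⟨j, hjT, ?_⟩
  calc eLpNorm (fun x => g x * (F i x - F j x)) p μ
      ≤ η * eLpNorm g p μ + (2 * C : ℝ≥0) * eLpNorm (Kᶜ.indicator g) p μ :=
        eLpNorm_mul_le_of_norm_le hp₁ hg.1 hK.measurableSet
          (fun x hx => by simpa [dist_eq_norm] using (hij x hx).le) hdiff
    _ ≤ ε / 2 + ε / 2 :=
        add_le_add hηg.le ((mul_le_mul_right htail _).trans (by rw [mul_comm]; exact hδC.le))
    _ = ε := ENNReal.add_halves ε

section SobolevLine

variable {E : Type*} [NormedAddCommGroup E]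

theorem intervalIntegral_norm_le_sqrt_mul_eLpNorm {f : ℝ → E} (hf : MemLp f 2 volume)
    {a b : ℝ} (hab : a ≤ b) :
    ∫ x in a..b, ‖f x‖ ≤ √(b - a) * (eLpNorm f 2 volume).toReal := by
  have hf_meas := hf.aestronglyMeasurable.restrict (s := Ioc a b)
  have holder := eLpNorm_le_eLpNorm_mul_rpow_measure_univ (p := 1) (q := 2) one_le_two hf_meas
  rw [Measure.restrict_apply_univ, Real.volume_Ioc] at holder
  norm_num at holder
  have hfin : eLpNorm f 2 (volume.restrict (Ioc a b)) ≠ ∞ := (hf.restrict _).eLpNorm_ne_top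
  calc ∫ x in a..b, ‖f x‖ = (eLpNorm f 1 (volume.restrict (Ioc a b))).toReal := by
        rw [intervalIntegral.integral_of_le hab, integral_norm_eq_lintegral_enorm hf_meas,
          eLpNorm_one_eq_lintegral_enorm]
    _ ≤ (eLpNorm f 2 (volume.restrict (Ioc a b))).toReal * √(b - a) := by
        refine (ENNReal.toReal_mono (by finiteness) holder).trans_eq ?_
        rw [ENNReal.toReal_mul, ← ENNReal.toReal_rpow, ENNReal.toReal_ofReal (by linarith),
          Real.sqrt_eq_rpow]
    _ ≤ √(b - a) * (eLpNorm f 2 volume).toReal := by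
        rw [mul_comm]
        gcongr
        · exact hf.eLpNorm_ne_top
        · exact Measure.restrict_le_self

variable [NormedSpace ℝ E] [CompleteSpace E]

theorem norm_sub_le_sqrt_mul_eLpNorm_deriv {u : ℝ → E} (hu : Differentiable ℝ u)
    (hu' : MemLp (deriv u) 2 volume) {a b : ℝ} (hab : a ≤ b) :
    ‖u b - u a‖ ≤ √(b - a) * (eLpNorm (deriv u) 2 volume).toReal := by
  have hint : IntervalIntegrable (deriv u) volume a b :=
    ((hu'.locallyIntegrable one_le_two).integrableOn_isCompact isCompact_uIcc).intervalIntegrable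
  rw [← intervalIntegral.integral_deriv_eq_sub (fun x _ => hu x) hint]
  exact (intervalIntegral.norm_integral_le_integral_norm hab).trans
    (intervalIntegral_norm_le_sqrt_mul_eLpNorm hu' hab)

theorem dist_le_eLpNorm_deriv_mul_sqrt_dist {u : ℝ → E} (hu : Differentiable ℝ u)
    (hu' : MemLp (deriv u) 2 volume) (x y : ℝ) :
    dist (u x) (u y) ≤ (eLpNorm (deriv u) 2 volume).toReal * √(dist x y) := by
  wlog hxy : x ≤ y generalizing x y
  · rw [dist_comm, dist_comm x]
    exact this y x (le_of_not_ge hxy)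
  rw [dist_comm, dist_eq_norm, Real.dist_eq, abs_sub_comm, abs_of_nonneg (by linarith), mul_comm]
  exact norm_sub_le_sqrt_mul_eLpNorm_deriv hu hu' hxy

theorem equicontinuous_of_eLpNorm_deriv_le {ι : Type*} {F : ι → ℝ → E}
    (hF : ∀ i, Differentiable ℝ (F i)) (hF' : ∀ i, MemLp (deriv (F i)) 2 volume) {C : ℝ}
    (hC : ∀ i, (eLpNorm (deriv (F i)) 2 volume).toReal ≤ C) : Equicontinuous F := by
  refine Metric.equicontinuous_of_continuity_modulus (fun r => C * √r) ?_ F fun x y i => ?_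
  · exact (by fun_prop : Continuous fun r : ℝ => C * √r).tendsto' 0 0 (by simp)
  · exact (dist_le_eLpNorm_deriv_mul_sqrt_dist (hF i) (hF' i) x y).trans
      (mul_le_mul_of_nonneg_right (hC i) (Real.sqrt_nonneg _))

theorem norm_le_eLpNorm_add_eLpNorm_deriv {u : ℝ → E} (hu : Differentiable ℝ u)
    (hu2 : MemLp u 2 volume) (hu' : MemLp (deriv u) 2 volume) (x : ℝ) :
    ‖u x‖ ≤ (eLpNorm u 2 volume).toReal + (eLpNorm (deriv u) 2 volume).toReal := by
  set D := (eLpNorm (deriv u) 2 volume).toReal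
  have hcont : Continuous fun y => ‖u y‖ := hu.continuous.norm
  have near : ∀ y ∈ Icc x (x + 1), ‖u x‖ ≤ ‖u y‖ + D := by
    intro y hy
    have hdist := dist_le_eLpNorm_deriv_mul_sqrt_dist hu hu' x y
    have : √(dist x y) ≤ 1 := by
      rw [Real.sqrt_le_one, Real.dist_eq, abs_sub_comm, abs_of_nonneg (by linarith [hy.1])]
      linarith [hy.2]
    calc ‖u x‖ ≤ ‖u y‖ + dist (u x) (u y) := by
          rw [dist_eq_norm]; exact norm_le_norm_add_norm_sub' _ _
      _ ≤ ‖u y‖ + D * 1 := by gcongr; exact hdist.trans (by gcongr)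
      _ = ‖u y‖ + D := by rw [mul_one]
  calc ‖u x‖ = ∫ _ in x..x + 1, ‖u x‖ := by simp
    _ ≤ ∫ y in x..x + 1, (‖u y‖ + D) :=
        intervalIntegral.integral_mono_on (by linarith) intervalIntegrable_const
          ((hcont.add continuous_const).intervalIntegrable _ _) near
    _ = (∫ y in x..x + 1, ‖u y‖) + D := by
        rw [intervalIntegral.integral_add (hcont.intervalIntegrable _ _) intervalIntegrable_const]
        simp
    _ ≤ (eLpNorm u 2 volume).toReal + D := by
        gcongr
        simpa using intervalIntegral_norm_le_sqrt_mul_eLpNorm hu2 (by linarith : x ≤ x + 1)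

end SobolevLine

theorem multiplication_operator_compact_general (g : ℝ → ℂ)
    (hg : MemLp g 2 volume)
    (V : Set (ℝ → ℂ)) (M : ℝ)
    (hV : ∀ u ∈ V, Differentiable ℝ u ∧ MemLp u 2 volume ∧ MemLp (deriv u) 2 volume ∧
      eLpNorm u 2 volume ≤ ENNReal.ofReal M ∧ eLpNorm (deriv u) 2 volume ≤ ENNReal.ofReal M) :
    (∀ u ∈ V, MemLp (fun x => g x * u x) 2 volume) ∧
    ∀ ε : ℝ, 0 < ε → ∃ F : Finset (ℝ → ℂ), ∀ u ∈ V, ∃ f ∈ F,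
      eLpNorm (fun x => g x * u x - f x) 2 volume ≤ ENNReal.ofReal ε := by
  classical
  have hbound : ∀ u ∈ V, ∀ x, ‖u x‖ ≤ 2 * M.toNNReal := fun u hu x => by
    obtain ⟨hu, hu2, hu', hM, hM'⟩ := hV u hu
    linarith [norm_le_eLpNorm_add_eLpNorm_deriv hu hu2 hu' x,
      ENNReal.toReal_le_coe_of_le_coe hM, ENNReal.toReal_le_coe_of_le_coe hM']
  have hequi : Equicontinuous fun u : V => u.1 :=
    equicontinuous_of_eLpNorm_deriv_le (fun u => (hV u u.2).1) (fun u => (hV u u.2).2.2.1)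
      (fun u => ENNReal.toReal_le_coe_of_le_coe (hV u u.2).2.2.2.2)
  refine ⟨fun u hu => hg.of_le_mul (c := 2 * M.toNNReal)
    (hg.1.mul (hV u hu).1.continuous.aestronglyMeasurable) (Eventually.of_forall fun x => ?_),
    fun ε hε => ?_⟩
  · rw [norm_mul, mul_comm]
    exact mul_le_mul_of_nonneg_right (hbound u hu x) (norm_nonneg _)
  obtain ⟨T, hT⟩ := exists_finset_eLpNorm_mul_sub_le_of_equicontinuous one_le_two (by norm_num)
    hg (C := 2 * M.toNNReal) (fun u x => by exact_mod_cast hbound u u.2 x) hequi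
    (ENNReal.ofReal_pos.mpr hε).ne'
  refine ⟨T.image fun v => g * v.1, fun u hu => ?_⟩
  obtain ⟨v, hvT, hv⟩ := hT ⟨u, hu⟩
  exact ⟨g * v.1, Finset.mem_image_of_mem _ hvT, by simpa only [Pi.mul_apply, mul_sub] using hv⟩

/-- For `g ∈ H¹(ℝ)`, the multiplication operator `u ↦ g·u` maps `H¹(ℝ)` into `L²(ℝ)` and is
compact: every set of `H¹`-functions that is bounded in the `H¹`-norm is mapped to a totally
bounded (precompact) subset of `L²(ℝ)`. -/
theorem multiplication_operator_compact (g : ℝ → ℂ)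
    (hgd : Differentiable ℝ g) (hg : MemLp g 2 volume) (hg' : MemLp (deriv g) 2 volume)
    (V : Set (ℝ → ℂ)) (M : ℝ)
    (hV : ∀ u ∈ V, Differentiable ℝ u ∧ MemLp u 2 volume ∧ MemLp (deriv u) 2 volume ∧
      eLpNorm u 2 volume ≤ ENNReal.ofReal M ∧ eLpNorm (deriv u) 2 volume ≤ ENNReal.ofReal M) :
    (∀ u ∈ V, MemLp (fun x => g x * u x) 2 volume) ∧
    ∀ ε : ℝ, 0 < ε → ∃ F : Finset (ℝ → ℂ), ∀ u ∈ V, ∃ f ∈ F,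
      eLpNorm (fun x => g x * u x - f x) 2 volume ≤ ENNReal.ofReal ε :=
  multiplication_operator_compact_general g hg V M hV
end

section
/- For the black soliton ψ₀(x) = √(−ω) tanh(√(−ω/2) x) with ω < 0 and the potential V(x) = cos(2x), the Melnikov-type integral ∫_ℝ V'(x) ψ₀(x) ψ₀'(x) dx equals −8π / sinh(√(2/(−ω)) π); in particular it is nonzero for every ω < 0. -/
/-!
With `ψ₀(x) = c tanh(a x)`, `c² = -ω = 2a²`, the integrand is `2ωa · sin(2x) tanh(ax) sech²(ax)`.
After rescaling to `y = 2ax`, the logistic substitution `t = σ(y)` gives `e^y = t / (1 - t)`,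
`tanh(y/2) = 2t - 1` and `sech²(y/2) dy = 4 dt`, so the two-sided Laplace transform
`∫ e^{sy} tanh(y/2) sech²(y/2) dy` becomes `4 ∫₀¹ t^s (1-t)^{-s} (2t-1) dt`, a difference of two
Beta integrals equal to `4 s Γ(1+s) Γ(1-s)`. At `s = ib`, Euler's reflection formula turns this
into `4πb² i / sinh(πb)`, and the imaginary part is the sine integral we need.
-/

open MeasureTheory Set Real

namespace Real

theorem hasDerivAt_tanh (x : ℝ) : HasDerivAt tanh (cosh x ^ 2)⁻¹ x := by
  have h := (hasDerivAt_sinh x).div (hasDerivAt_cosh x) (cosh_pos x).ne'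
  rw [show sinh / cosh = tanh from funext fun y => (tanh_eq_sinh_div_cosh y).symm] at h
  refine h.congr_deriv ?_
  rw [← sq, ← sq, cosh_sq_sub_sinh_sq, one_div]

theorem tanh_half_eq_two_mul_sigmoid_sub_one (x : ℝ) : tanh (x / 2) = 2 * sigmoid x - 1 := by
  rw [tanh_eq_sinh_div_cosh, sinh_eq, cosh_eq, sigmoid_def, show -x = -(x / 2) + -(x / 2) by ring,
    exp_add]
  have := exp_pos (x / 2)
  rw [exp_neg]
  field_simp
  ring

theorem inv_cosh_half_sq (x : ℝ) : (cosh (x / 2) ^ 2)⁻¹ = 4 * sigmoid x * (1 - sigmoid x) := by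
  rw [cosh_eq, sigmoid_def, show -x = -(x / 2) + -(x / 2) by ring, exp_add]
  have := exp_pos (x / 2)
  rw [exp_neg]
  field_simp
  ring

theorem log_sigmoid_sub_log_one_sub_sigmoid (x : ℝ) :
    log (sigmoid x) - log (1 - sigmoid x) = x := by
  rw [← sigmoid_neg, ← sigmoid_mul_rexp_neg, log_mul (sigmoid_pos x).ne' (exp_pos _).ne', log_exp]
  ring

theorem abs_sigmoid_mul_one_sub_sigmoid (x : ℝ) :
    |sigmoid x * (1 - sigmoid x)| = sigmoid x * (1 - sigmoid x) :=
  abs_of_pos (mul_pos (sigmoid_pos x) (sub_pos.2 (sigmoid_lt_one x)))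

end Real

section SigmoidSubstitution

variable {E : Type*} [NormedAddCommGroup E] [NormedSpace ℝ E]

theorem integrableOn_Ioo_zero_one_iff_integrable_sigmoid (g : ℝ → E) :
    IntegrableOn g (Ioo 0 1) ↔
      Integrable fun x => (sigmoid x * (1 - sigmoid x)) • g (sigmoid x) := by
  have := integrableOn_image_iff_integrableOn_abs_deriv_smul MeasurableSet.univ
    (fun x _ => (hasDerivAt_sigmoid x).hasDerivWithinAt) sigmoid_injective.injOn g
  simpa only [image_univ, range_sigmoid, integrableOn_univ, abs_sigmoid_mul_one_sub_sigmoid]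
    using this

theorem setIntegral_Ioo_zero_one_eq_integral_sigmoid (g : ℝ → E) :
    ∫ t in Ioo 0 1, g t = ∫ x, (sigmoid x * (1 - sigmoid x)) • g (sigmoid x) := by
  have := integral_image_eq_integral_abs_deriv_smul MeasurableSet.univ
    (fun x _ => (hasDerivAt_sigmoid x).hasDerivWithinAt) sigmoid_injective.injOn g
  simpa only [image_univ, range_sigmoid, setIntegral_univ, abs_sigmoid_mul_one_sub_sigmoid]
    using this

end SigmoidSubstitution

namespace Complex

theorem Gamma_one_add_mul_Gamma_one_sub {s : ℂ} (hs : s ≠ 0) :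
    Gamma (1 + s) * Gamma (1 - s) = π * s / sin (π * s) := by
  rw [add_comm, Gamma_add_one s hs, mul_assoc, Gamma_mul_Gamma_one_sub]
  ring

theorem Gamma_one_add_mul_I_mul_Gamma_one_sub_mul_I {b : ℝ} (hb : b ≠ 0) :
    Gamma (1 + b * I) * Gamma (1 - b * I) = ((π * b / Real.sinh (π * b) : ℝ) : ℂ) := by
  have hsinh : Real.sinh (π * b) ≠ 0 := by simpa using mul_ne_zero pi_ne_zero hb
  rw [Gamma_one_add_mul_Gamma_one_sub (by simpa using hb), ← mul_assoc, ← ofReal_mul,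
    sin_mul_I, ← ofReal_sinh]
  field_simp
  push_cast
  ring

theorem betaIntegral_eq_setIntegral_Ioo (u v : ℂ) :
    betaIntegral u v = ∫ t in Ioo (0 : ℝ) 1, (t : ℂ) ^ (u - 1) * (1 - (t : ℂ)) ^ (v - 1) := by
  rw [betaIntegral, intervalIntegral.integral_of_le zero_le_one, integral_Ioc_eq_integral_Ioo]

theorem integrableOn_Ioo_betaIntegrand {u v : ℂ} (hu : 0 < u.re) (hv : 0 < v.re) :
    IntegrableOn (fun t : ℝ => (t : ℂ) ^ (u - 1) * (1 - (t : ℂ)) ^ (v - 1)) (Ioo 0 1) :=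
  (intervalIntegrable_iff_integrableOn_Ioo_of_le zero_le_one).1 (betaIntegral_convergent hu hv)

theorem eqOn_cpow_mul_one_sub_cpow_neg_mul_two_mul_sub_one (s : ℂ) :
    EqOn (fun t : ℝ => (t : ℂ) ^ s * (1 - (t : ℂ)) ^ (-s) * (2 * t - 1))
      (fun t : ℝ => 2 * ((t : ℂ) ^ ((2 + s) - 1) * (1 - (t : ℂ)) ^ ((1 - s) - 1))
        - (t : ℂ) ^ ((1 + s) - 1) * (1 - (t : ℂ)) ^ ((1 - s) - 1)) (Ioo 0 1) := by
  intro t ht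
  have ht0 : (t : ℂ) ≠ 0 := ofReal_ne_zero.2 ht.1.ne'
  simp only
  rw [show (2 + s) - 1 = s + 1 by ring, show (1 + s) - 1 = s by ring,
    show (1 - s) - 1 = -s by ring, cpow_add _ _ ht0, cpow_one]
  ring

section OddBetaIntegral

variable {s : ℂ}

theorem integrableOn_cpow_mul_one_sub_cpow_neg_mul_two_mul_sub_one
    (hs₀ : -1 < s.re) (hs₁ : s.re < 1) :
    IntegrableOn (fun t : ℝ => (t : ℂ) ^ s * (1 - (t : ℂ)) ^ (-s) * (2 * t - 1)) (Ioo 0 1) := by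
  refine IntegrableOn.congr_fun ?_ (eqOn_cpow_mul_one_sub_cpow_neg_mul_two_mul_sub_one s).symm
    measurableSet_Ioo
  refine ((integrableOn_Ioo_betaIntegrand ?_ ?_).const_mul 2).sub
    (integrableOn_Ioo_betaIntegrand ?_ ?_) <;> simp only [add_re, re_ofNat, sub_re, one_re] <;> linarith

theorem setIntegral_cpow_mul_one_sub_cpow_neg_mul_two_mul_sub_one
    (hs₀ : -1 < s.re) (hs₁ : s.re < 1) :
    ∫ t in Ioo (0 : ℝ) 1, (t : ℂ) ^ s * (1 - (t : ℂ)) ^ (-s) * (2 * t - 1)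
      = s * (Gamma (1 + s) * Gamma (1 - s)) := by
  have h2 : 0 < (2 + s).re := by rw [add_re, re_ofNat]; linarith
  have h1 : 0 < (1 + s).re := by rw [add_re, one_re]; linarith
  have h1' : 0 < (1 - s).re := by rw [sub_re, one_re]; linarith
  have hB₂ := Gamma_mul_Gamma_eq_betaIntegral h2 h1'
  have hB₁ := Gamma_mul_Gamma_eq_betaIntegral h1 h1'
  have hΓ₃ : Gamma 3 = 2 := by simp [Gamma_ofNat_eq_factorial]
  have hΓ₂ : Gamma 2 = 1 := by simp [Gamma_ofNat_eq_factorial]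
  have hΓ : Gamma (2 + s) = (1 + s) * Gamma (1 + s) := by
    rw [show 2 + s = (1 + s) + 1 by ring, Gamma_add_one _ (fun h => by simp [h] at h1)]
  rw [show 2 + s + (1 - s) = 3 by ring, hΓ₃, hΓ] at hB₂
  rw [show 1 + s + (1 - s) = 2 by ring, hΓ₂, one_mul] at hB₁
  rw [setIntegral_congr_fun measurableSet_Ioo
      (eqOn_cpow_mul_one_sub_cpow_neg_mul_two_mul_sub_one s),
    integral_sub ((integrableOn_Ioo_betaIntegrand h2 h1').const_mul 2)
      (integrableOn_Ioo_betaIntegrand h1 h1'),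
    integral_const_mul, ← betaIntegral_eq_setIntegral_Ioo, ← betaIntegral_eq_setIntegral_Ioo,
    ← hB₁]
  linear_combination -hB₂

end OddBetaIntegral

end Complex

theorem cpow_sigmoid_mul_cpow_one_sub_sigmoid_neg (s : ℂ) (y : ℝ) :
    (sigmoid y : ℂ) ^ s * (1 - (sigmoid y : ℂ)) ^ (-s) = Complex.exp (s * y) := by
  have h₀ := sigmoid_pos y
  have h₁ : 0 < 1 - sigmoid y := sub_pos.2 (sigmoid_lt_one y)
  rw [show (1 : ℂ) - sigmoid y = ((1 - sigmoid y : ℝ) : ℂ) by push_cast; ring,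
    Complex.cpow_def_of_ne_zero (Complex.ofReal_ne_zero.2 h₀.ne'),
    Complex.cpow_def_of_ne_zero (Complex.ofReal_ne_zero.2 h₁.ne'), ← Complex.ofReal_log h₀.le,
    ← Complex.ofReal_log h₁.le, ← Complex.exp_add]
  have hy := congrArg ((↑) : ℝ → ℂ) (log_sigmoid_sub_log_one_sub_sigmoid y)
  push_cast at hy
  rw [← hy]
  ring_nf

theorem cexp_mul_tanh_half_div_cosh_half_sq_eq_sigmoid (s : ℂ) (y : ℝ) :
    Complex.exp (s * y) * ((tanh (y / 2) / cosh (y / 2) ^ 2 : ℝ) : ℂ)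
      = 4 * (sigmoid y * (1 - sigmoid y)) • ((sigmoid y : ℂ) ^ s * (1 - (sigmoid y : ℂ)) ^ (-s)
        * (2 * (sigmoid y : ℂ) - 1)) := by
  rw [cpow_sigmoid_mul_cpow_one_sub_sigmoid_neg, div_eq_mul_inv,
    tanh_half_eq_two_mul_sigmoid_sub_one, inv_cosh_half_sq, Complex.real_smul]
  push_cast
  ring

section LaplaceTransform

variable {s : ℂ}

theorem integrable_cexp_mul_tanh_half_div_cosh_half_sq (hs₀ : -1 < s.re) (hs₁ : s.re < 1) :
    Integrable fun y : ℝ => Complex.exp (s * y) * ((tanh (y / 2) / cosh (y / 2) ^ 2 : ℝ) : ℂ) := by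
  simp_rw [cexp_mul_tanh_half_div_cosh_half_sq_eq_sigmoid]
  exact ((integrableOn_Ioo_zero_one_iff_integrable_sigmoid _).1
    (Complex.integrableOn_cpow_mul_one_sub_cpow_neg_mul_two_mul_sub_one hs₀ hs₁)).const_mul 4

theorem integral_cexp_mul_tanh_half_div_cosh_half_sq (hs₀ : -1 < s.re) (hs₁ : s.re < 1) :
    ∫ y : ℝ, Complex.exp (s * y) * ((tanh (y / 2) / cosh (y / 2) ^ 2 : ℝ) : ℂ)
      = 4 * s * (Complex.Gamma (1 + s) * Complex.Gamma (1 - s)) := by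
  have h := setIntegral_Ioo_zero_one_eq_integral_sigmoid
    fun t : ℝ => (t : ℂ) ^ s * (1 - (t : ℂ)) ^ (-s) * (2 * t - 1)
  rw [Complex.setIntegral_cpow_mul_one_sub_cpow_neg_mul_two_mul_sub_one hs₀ hs₁] at h
  simp_rw [cexp_mul_tanh_half_div_cosh_half_sq_eq_sigmoid]
  rw [integral_const_mul, ← h]
  ring

end LaplaceTransform

theorem integral_sin_mul_tanh_half_div_cosh_half_sq {b : ℝ} (hb : b ≠ 0) :
    ∫ y : ℝ, sin (b * y) * (tanh (y / 2) / cosh (y / 2) ^ 2) = 4 * π * b ^ 2 / sinh (π * b) := by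
  have hs₀ : -1 < (b * Complex.I).re := by simp
  have hs₁ : (b * Complex.I).re < 1 := by simp
  have him := integral_im (integrable_cexp_mul_tanh_half_div_cosh_half_sq hs₀ hs₁)
  rw [integral_cexp_mul_tanh_half_div_cosh_half_sq hs₀ hs₁,
    Complex.Gamma_one_add_mul_I_mul_Gamma_one_sub_mul_I hb] at him
  convert him using 1
  · congr 1 with y
    rw [RCLike.im_to_complex, Complex.im_mul_ofReal, mul_right_comm, ← Complex.ofReal_mul,
      Complex.exp_ofReal_mul_I_im]
  · simp only [RCLike.im_to_complex, Complex.mul_im, Complex.re_ofNat, Complex.im_ofNat,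
      Complex.ofReal_re, Complex.ofReal_im, Complex.mul_re, Complex.I_re, Complex.I_im]
    ring

theorem integral_sin_mul_tanh_div_cosh_sq {a k : ℝ} (ha : 0 < a) (hk : k ≠ 0) :
    ∫ x : ℝ, sin (k * x) * (tanh (a * x) / cosh (a * x) ^ 2)
      = π * k ^ 2 / (2 * a ^ 3 * sinh (π * k / (2 * a))) := by
  have hscale := Measure.integral_comp_mul_left
    (fun y : ℝ => sin (k / (2 * a) * y) * (tanh (y / 2) / cosh (y / 2) ^ 2)) (2 * a)
  have hk' (x : ℝ) : k / (2 * a) * (2 * a * x) = k * x := by field_simp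
  have ha' (x : ℝ) : 2 * a * x / 2 = a * x := by ring
  simp only [hk', ha', abs_of_pos (inv_pos.2 (mul_pos two_pos ha)), smul_eq_mul] at hscale
  rw [hscale, integral_sin_mul_tanh_half_div_cosh_half_sq (div_ne_zero hk (by positivity)),
    mul_div_assoc']
  field_simp
  norm_num

theorem deriv_cos_mul_mul_const_mul_tanh_mul_deriv (k c a x : ℝ) :
    deriv (fun y => cos (k * y)) x * (c * tanh (a * x)) * deriv (fun y => c * tanh (a * y)) x
      = -k * c ^ 2 * a * (sin (k * x) * (tanh (a * x) / cosh (a * x) ^ 2)) := by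
  have hψ : HasDerivAt (fun y => c * tanh (a * y)) (c * ((cosh (a * x) ^ 2)⁻¹ * (a * 1))) x :=
    ((hasDerivAt_tanh _).comp x ((hasDerivAt_id' x).const_mul a)).const_mul c
  rw [((hasDerivAt_id' x).const_mul k).cos.deriv, hψ.deriv]
  ring

/-- For the black soliton `ψ₀(x) = √(−ω) tanh(√(−ω/2) x)` (ω < 0) and the potential
`V(x) = cos(2x)`, the Melnikov integral `∫ V'(x) ψ₀(x) ψ₀'(x) dx` equals
`−8π / sinh(√(2/(−ω)) π)`; in particular it is nonzero. -/
theorem melnikov_integral_cos (ω : ℝ) (hω : ω < 0) :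
    (∫ x : ℝ,
        deriv (fun y : ℝ => Real.cos (2 * y)) x *
          (Real.sqrt (-ω) * Real.tanh (Real.sqrt (-ω / 2) * x)) *
          deriv (fun y : ℝ => Real.sqrt (-ω) * Real.tanh (Real.sqrt (-ω / 2) * y)) x)
      = -(8 * Real.pi) / Real.sinh (Real.sqrt (2 / (-ω)) * Real.pi) ∧
    (∫ x : ℝ,
        deriv (fun y : ℝ => Real.cos (2 * y)) x *
          (Real.sqrt (-ω) * Real.tanh (Real.sqrt (-ω / 2) * x)) *
          deriv (fun y : ℝ => Real.sqrt (-ω) * Real.tanh (Real.sqrt (-ω / 2) * y)) x) ≠ 0 := by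
  set a := √(-ω / 2) with ha_def
  have ha : 0 < a := sqrt_pos.2 (by linarith)
  have hω_eq : ω = -2 * a ^ 2 := by rw [ha_def, sq_sqrt (by linarith)]; ring
  have hc : √(-ω) ^ 2 = -ω := sq_sqrt (by linarith)
  have hsqrt : √(2 / -ω) * π = π / a := by
    rw [hω_eq, show 2 / -(-2 * a ^ 2) = (1 / a) ^ 2 by field_simp, sqrt_sq (by positivity)]
    ring
  have hsinh : 0 < sinh (π / a) := sinh_pos_iff.2 (by positivity)
  have hvalue : ∫ x : ℝ, deriv (fun y => cos (2 * y)) x * (√(-ω) * tanh (a * x)) *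
      deriv (fun y => √(-ω) * tanh (a * y)) x = -(8 * π) / sinh (√(2 / -ω) * π) := by
    simp_rw [deriv_cos_mul_mul_const_mul_tanh_mul_deriv, hc]
    rw [integral_const_mul, integral_sin_mul_tanh_div_cosh_sq ha two_ne_zero, hsqrt,
      show π * 2 / (2 * a) = π / a by field_simp, hω_eq]
    field_simp
    ring
  refine ⟨hvalue, ?_⟩
  rw [hvalue, hsqrt]
  exact div_ne_zero (neg_ne_zero.2 (by positivity)) hsinh.ne'
end

section
/- Let T(x,y) be the evolution operator of a linear system φ' = A(x)φ. If φ' = A(x)φ has exponential dichotomies on [a,b] and [b,c] with the same constants K, μ and projections P₁, P₂ respectively, and Q is a projection with ran(Q) = ran(P₂(b)) and ker(Q) = ker(P₁(b)), then ‖T(x,y)T(y,b)QT(b,y)‖ ≤ K²‖Q‖e^{−μ(x−y)} for all a ≤ y ≤ b ≤ x ≤ c. -/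
/-- Operator norm of a square complex matrix, induced by a norm on `ℂ^n`. -/
noncomputable def matOpNorm {n : ℕ} (M : Matrix (Fin n) (Fin n) ℂ) : ℝ :=
  ‖LinearMap.toContinuousLinearMap M.mulVecLin‖

lemma matOpNorm_nonneg {n : ℕ} (M : Matrix (Fin n) (Fin n) ℂ) : 0 ≤ matOpNorm M :=
  norm_nonneg _

lemma matOpNorm_mul_le {n : ℕ} (A B : Matrix (Fin n) (Fin n) ℂ) :
    matOpNorm (A * B) ≤ matOpNorm A * matOpNorm B := by
  have h : LinearMap.toContinuousLinearMap (A*B).mulVecLin =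
      (LinearMap.toContinuousLinearMap A.mulVecLin).comp
        (LinearMap.toContinuousLinearMap B.mulVecLin) := by
    ext v i
    simp [Matrix.mulVecLin_mul]
  unfold matOpNorm
  rw [h]
  exact ContinuousLinearMap.opNorm_comp_le _ _

/-- Pasting lemma estimate: if `φ' = A(x)φ` has exponential dichotomies on `[a,b]` and `[b,c]`
with the same constants `K, μ` and projections `P₁, P₂`, and `Q` is a projection with
`ran Q = ran P₂(b)` and `ker Q = ker P₁(b)`, then
`‖T(x,y) T(y,b) Q T(b,y)‖ ≤ K² ‖Q‖ e^{−μ(x−y)}` for all `a ≤ y ≤ b ≤ x ≤ c`. -/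
theorem pasting_dichotomy_estimate (n : ℕ) (a b c : ℝ) (hab : a ≤ b) (hbc : b ≤ c)
    (T : ℝ → ℝ → Matrix (Fin n) (Fin n) ℂ)
    (hTid : ∀ x, T x x = 1)
    (hTcoc : ∀ x y z, T x y * T y z = T x z)
    (K μ : ℝ) (hK : 0 < K) (hμ : 0 < μ)
    (P₁ P₂ : ℝ → Matrix (Fin n) (Fin n) ℂ)
    (hP₁proj : ∀ x ∈ Set.Icc a b, P₁ x * P₁ x = P₁ x)
    (hP₁comm : ∀ x ∈ Set.Icc a b, ∀ y ∈ Set.Icc a b, P₁ x * T x y = T x y * P₁ y)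
    (hP₁s : ∀ x ∈ Set.Icc a b, ∀ y ∈ Set.Icc a b, y ≤ x →
      matOpNorm (T x y * P₁ y) ≤ K * Real.exp (-μ * (x - y)))
    (hP₁u : ∀ x ∈ Set.Icc a b, ∀ y ∈ Set.Icc a b, x ≤ y →
      matOpNorm (T x y * (1 - P₁ y)) ≤ K * Real.exp (-μ * (y - x)))
    (hP₂proj : ∀ x ∈ Set.Icc b c, P₂ x * P₂ x = P₂ x)
    (hP₂comm : ∀ x ∈ Set.Icc b c, ∀ y ∈ Set.Icc b c, P₂ x * T x y = T x y * P₂ y)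
    (hP₂s : ∀ x ∈ Set.Icc b c, ∀ y ∈ Set.Icc b c, y ≤ x →
      matOpNorm (T x y * P₂ y) ≤ K * Real.exp (-μ * (x - y)))
    (hP₂u : ∀ x ∈ Set.Icc b c, ∀ y ∈ Set.Icc b c, x ≤ y →
      matOpNorm (T x y * (1 - P₂ y)) ≤ K * Real.exp (-μ * (y - x)))
    (Q : Matrix (Fin n) (Fin n) ℂ) (hQ : Q * Q = Q)
    (hQran : LinearMap.range Q.mulVecLin = LinearMap.range (P₂ b).mulVecLin)
    (hQker : LinearMap.ker Q.mulVecLin = LinearMap.ker (P₁ b).mulVecLin) :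
    ∀ y ∈ Set.Icc a b, ∀ x ∈ Set.Icc b c,
      matOpNorm (T x y * T y b * Q * T b y) ≤ K ^ 2 * matOpNorm Q * Real.exp (-μ * (x - y)) := by
  intro y hy x hx
  have hbmem₁ : b ∈ Set.Icc a b := ⟨hab, le_refl b⟩
  have hbmem₂ : b ∈ Set.Icc b c := ⟨le_refl b, hbc⟩
  -- P₂ b * Q = Q
  have hPQ : P₂ b * Q = Q := by
    apply Matrix.toLin'.injective
    rw [Matrix.toLin'_apply', Matrix.toLin'_apply', Matrix.mulVecLin_mul]
    refine LinearMap.ext fun v => ?_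
    have hmem : Q.mulVecLin v ∈ LinearMap.range (P₂ b).mulVecLin := by
      rw [← hQran]; exact ⟨v, rfl⟩
    obtain ⟨w, hw⟩ := hmem
    have : (P₂ b).mulVecLin ((P₂ b).mulVecLin w) = (P₂ b).mulVecLin w := by
      rw [← LinearMap.comp_apply, ← Matrix.mulVecLin_mul, hP₂proj b hbmem₂]
    simp only [LinearMap.comp_apply]
    rw [← hw, this, hw]
  -- Q * P₁ b = Q
  have hQP : Q * P₁ b = Q := by
    apply Matrix.toLin'.injective
    rw [Matrix.toLin'_apply', Matrix.toLin'_apply', Matrix.mulVecLin_mul]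
    refine LinearMap.ext fun v => ?_
    have hker : v - (P₁ b).mulVecLin v ∈ LinearMap.ker Q.mulVecLin := by
      rw [hQker, LinearMap.mem_ker, map_sub, ← LinearMap.comp_apply, ← Matrix.mulVecLin_mul,
        hP₁proj b hbmem₁, sub_self]
    rw [LinearMap.mem_ker, map_sub, sub_eq_zero] at hker
    simp only [LinearMap.comp_apply]
    exact hker.symm
  have key : T x y * T y b * Q * T b y = (T x b * P₂ b) * Q * (T b y * P₁ y) := by
    rw [hTcoc x y b]
    have h1 : P₁ b * T b y = T b y * P₁ y := hP₁comm b hbmem₁ y hy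
    calc T x b * Q * T b y = T x b * (P₂ b * Q * P₁ b) * T b y := by rw [hPQ, hQP]
      _ = (T x b * P₂ b) * Q * (P₁ b * T b y) := by noncomm_ring
      _ = (T x b * P₂ b) * Q * (T b y * P₁ y) := by rw [h1]
  rw [key]
  have e1 : matOpNorm (T x b * P₂ b) ≤ K * Real.exp (-μ * (x - b)) :=
    hP₂s x hx b hbmem₂ hx.1
  have e2 : matOpNorm (T b y * P₁ y) ≤ K * Real.exp (-μ * (b - y)) :=
    hP₁s b hbmem₁ y hy hy.2
  have step1 : matOpNorm ((T x b * P₂ b) * Q * (T b y * P₁ y)) ≤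
      matOpNorm (T x b * P₂ b) * matOpNorm Q * matOpNorm (T b y * P₁ y) := by
    calc matOpNorm ((T x b * P₂ b) * Q * (T b y * P₁ y))
        ≤ matOpNorm ((T x b * P₂ b) * Q) * matOpNorm (T b y * P₁ y) := matOpNorm_mul_le _ _
      _ ≤ matOpNorm (T x b * P₂ b) * matOpNorm Q * matOpNorm (T b y * P₁ y) := by
          apply mul_le_mul_of_nonneg_right (matOpNorm_mul_le _ _) (matOpNorm_nonneg _)
  refine step1.trans ?_
  have hexp : Real.exp (-μ * (x - b)) * Real.exp (-μ * (b - y)) = Real.exp (-μ * (x - y)) := by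
    rw [← Real.exp_add]; ring_nf
  calc matOpNorm (T x b * P₂ b) * matOpNorm Q * matOpNorm (T b y * P₁ y)
      ≤ (K * Real.exp (-μ * (x - b))) * matOpNorm Q * (K * Real.exp (-μ * (b - y))) := by
        apply mul_le_mul
        · exact mul_le_mul_of_nonneg_right e1 (matOpNorm_nonneg _)
        · exact e2
        · exact matOpNorm_nonneg _
        · exact mul_nonneg (by positivity) (matOpNorm_nonneg _)
    _ = K ^ 2 * matOpNorm Q * (Real.exp (-μ * (x - b)) * Real.exp (-μ * (b - y))) := by ring
    _ = K ^ 2 * matOpNorm Q * Real.exp (-μ * (x - y)) := by rw [hexp]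
end
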